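/- Suppose D is a derivation of 𝔪 = g_{<0}(h) of weight ι vanishing on all coordinate vector fields, with coefficients D(x_i ∂_n) = Σ_k a_i^k ∂_k. If a_i^j ≠ 0 for some i, j < n, then r_i = r_j = r_{n-1} and ι = r_n - 2r_{n-1}; in particular derivations of this type can only exist when r_n ≥ 2r_{n-1}. -/
import Mathlib


open MvPolynomial

/-- Polynomial vector fields on ℝⁿ, given by their coefficient polynomials. -/
abbrev VF (n : ℕ) := Fin n → MvPolynomial (Fin n) ℝ

/-- Lie bracket of polynomial vector fields. -/
noncomputable def bracket {n : ℕ} (V W : VF n) : VF n :=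
  fun i => ∑ j, (V j * pderiv j (W i) - W j * pderiv j (V i))

/-- The weight (Euler) vector field ∇ʰ = Σᵢ rᵢ xⁱ ∂ᵢ of the dilation with weights r. -/
noncomputable def nabla {n : ℕ} (r : Fin n → ℕ) : VF n :=
  fun i => (r i : MvPolynomial (Fin n) ℝ) * X i

/-- A polynomial vector field is homogeneous of weight `a` w.r.t. the dilation `r`. -/
def IsHomog {n : ℕ} (r : Fin n → ℕ) (a : ℤ) (V : VF n) : Prop :=
  bracket (nabla r) V = fun i => (a : ℝ) • V i

/-- The coordinate vector field ∂ᵢ. -/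
noncomputable def coordVF {n : ℕ} (i : Fin n) : VF n := fun k => if k = i then 1 else 0

/-- The vector field f ∂ⱼ. -/
noncomputable def vfOf {n : ℕ} (f : MvPolynomial (Fin n) ℝ) (j : Fin n) : VF n :=
  fun k => if k = j then f else 0

/-- 𝔪 = g₋(h): the span of homogeneous polynomial vector fields of negative weight. -/
noncomputable def negPart {n : ℕ} (r : Fin n → ℕ) : Submodule ℝ (VF n) :=
  Submodule.span ℝ {V : VF n | ∃ k : ℤ, k < 0 ∧ IsHomog r k V}

/- ### Auxiliary lemmas -/

lemma homog_vfOf {N : ℕ} (r : Fin N → ℕ) (i m : Fin N) :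
    IsHomog r ((r i : ℤ) - r m) (vfOf (X i) m) := by
  unfold IsHomog bracket nabla vfOf
  funext q
  by_cases hq : q = m <;>
    simp [hq, pderiv_X, Pi.single_apply, mul_ite, ite_mul, smul_eq_C_mul] <;>
    ring

lemma vfOf_mem_negPart {N : ℕ} (r : Fin N → ℕ) {i m : Fin N} (h : r i < r m) :
    vfOf (X i) m ∈ negPart r :=
  Submodule.subset_span ⟨(r i : ℤ) - r m, by omega, homog_vfOf r i m⟩

lemma bracket_const_vfX {N : ℕ} (c : Fin N → ℝ) (i m : Fin N) :
    bracket (fun k => C (c k)) (vfOf (X i) m) = vfOf (C (c i)) m := by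
  unfold bracket vfOf
  funext q
  by_cases hq : q = m <;>
    simp [hq, pderiv_X, Pi.single_apply, mul_ite, ite_mul]

lemma bracket_vfX_const {N : ℕ} (c : Fin N → ℝ) (i m : Fin N) :
    bracket (vfOf (X i) m) (fun k => C (c k)) = vfOf (-C (c i)) m := by
  unfold bracket vfOf
  funext q
  by_cases hq : q = m <;>
    simp [hq, pderiv_X, Pi.single_apply, mul_ite, ite_mul]

lemma bracket_vfX_vfX_same {N : ℕ} {i j L : Fin N} (hi : i ≠ L) (hj : j ≠ L) :
    bracket (vfOf (X j) L) (vfOf (X i) L) = 0 := by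
  unfold bracket vfOf
  funext q
  by_cases hq : q = L <;>
    simp [hq, pderiv_X, Pi.single_apply, mul_ite, ite_mul, Ne.symm hi, Ne.symm hj, hi, hj]

lemma bracket_vfX_chain {N : ℕ} {i L : Fin N} (m : Fin N) (hi : i ≠ L) :
    bracket (vfOf (X i) m) (vfOf (X m) L) = vfOf (X i) L := by
  unfold bracket vfOf
  funext q
  by_cases hq : q = L <;> by_cases hq2 : q = m <;>
    simp [hq, hq2, pderiv_X, Pi.single_apply, mul_ite, ite_mul, Ne.symm hi, hi] <;>
    split_ifs with h <;>
    simp_all [pderiv_X, Pi.single_apply, Ne.symm hi]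

lemma constCoeff_bracket {N : ℕ} (U : VF N) {j L : Fin N} (m : Fin N) (hj : j ≠ L) :
    constantCoeff (bracket U (vfOf (X m) L) j) = 0 := by
  unfold bracket vfOf
  simp [if_neg hj, ite_mul, map_sum]

lemma bracket_nabla_const {N : ℕ} (r : Fin N → ℕ) (c : Fin N → ℝ) (j : Fin N) :
    bracket (nabla r) (fun k => C (c k)) j = -(C (c j) * (r j : MvPolynomial (Fin N) ℝ)) := by
  unfold bracket nabla
  simp [pderiv_X, Pi.single_apply, mul_ite, ite_mul, mul_comm]

/-- If `D` is a derivation of `𝔪 = g₋(h)` of weight `ι` vanishing on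
all coordinate vector fields, with `D(xᵢ∂ₙ) = Σₖ aᵢᵏ ∂ₖ`, and some `aᵢʲ ≠ 0` with
`i, j < n`, then `rᵢ = rⱼ = rₙ₋₁` and `ι = rₙ - 2rₙ₋₁`; in particular such derivations
can only exist when `ι ≥ 0` forces `rₙ ≥ 2rₙ₋₁`. -/
theorem nonzero_entry_forces_weights
    (n : ℕ) (r : Fin (n + 2) → ℕ) (hr : ∀ i, 0 < r i) (hmono : Monotone r)
    (htop : r (⟨n, by omega⟩ : Fin (n + 2)) < r (Fin.last (n + 1)))
    (ι : ℤ)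
    (D : VF (n + 2) → VF (n + 2))
    (hadd : ∀ V W, D (V + W) = D V + D W)
    (hsmul : ∀ (c : ℝ) V, D (c • V) = c • D V)
    (hweight : ∀ (k : ℤ) V, k < 0 → IsHomog r k V → IsHomog r (k + ι) (D V))
    (hLeib : ∀ V ∈ negPart r, ∀ W ∈ negPart r,
      D (bracket V W) = bracket (D V) W + bracket V (D W))
    (hcoord : ∀ i, D (coordVF i) = 0)
    (a : Fin (n + 2) → Fin (n + 2) → ℝ)
    (hDval : ∀ i, i ≠ Fin.last (n + 1) →
      D (vfOf (X i) (Fin.last (n + 1))) = fun k => C (a i k)) :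
    ∀ i j, i ≠ Fin.last (n + 1) → j ≠ Fin.last (n + 1) → a i j ≠ 0 →
      r i = r (⟨n, by omega⟩ : Fin (n + 2)) ∧
      r j = r (⟨n, by omega⟩ : Fin (n + 2)) ∧
      ι = (r (Fin.last (n + 1)) : ℤ) - 2 * (r (⟨n, by omega⟩ : Fin (n + 2)) : ℤ) := by
  set L : Fin (n + 2) := Fin.last (n + 1) with hL
  set p : Fin (n + 2) := ⟨n, by omega⟩ with hp
  have hpL : p ≠ L := by
    intro h
    have := congrArg Fin.val h
    simp [hp, hL, Fin.val_last] at this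
  -- any index ≠ L has weight ≤ r p < r L
  have hle : ∀ i : Fin (n + 2), i ≠ L → r i ≤ r p := by
    intro i hi
    apply hmono
    have : (i : ℕ) ≠ n + 1 := fun h => hi (Fin.ext (by simp [hL, Fin.val_last, h]))
    have h2 := i.isLt
    exact Fin.mk_le_mk.mpr (by omega) -- i ≤ p
  have hltL : ∀ i : Fin (n + 2), i ≠ L → r i < r L := fun i hi =>
    lt_of_le_of_lt (hle i hi) htop
  have hmem : ∀ i : Fin (n + 2), i ≠ L → vfOf (X i) L ∈ negPart r := fun i hi =>
    vfOf_mem_negPart r (hltL i hi)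
  have hD0 : D 0 = 0 := by
    have := hsmul 0 0
    simpa using this
  -- Step A : symmetry of a
  have hstepA : ∀ i j : Fin (n + 2), i ≠ L → j ≠ L → a j i = a i j := by
    intro i j hi hj
    have h0 := hLeib (vfOf (X j) L) (hmem j hj) (vfOf (X i) L) (hmem i hi)
    rw [bracket_vfX_vfX_same hi hj, hD0, hDval j hj, hDval i hi,
      bracket_const_vfX, bracket_vfX_const] at h0
    have h1 := congrArg constantCoeff (congrFun h0 L)
    simp [vfOf] at h1
    linarith
  -- Step B : a i j ≠ 0 → ¬ (r i < r j)
  have hstepB : ∀ i j : Fin (n + 2), i ≠ L → j ≠ L → a i j ≠ 0 → ¬ (r i < r j) := by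
    intro i j hi hj ha hlt
    have h0 := hLeib (vfOf (X i) j) (vfOf_mem_negPart r hlt) (vfOf (X j) L) (hmem j hj)
    rw [bracket_vfX_chain j hi, hDval i hi, hDval j hj, bracket_vfX_const] at h0
    have h1 := congrArg constantCoeff (congrFun h0 j)
    simp only [Pi.add_apply, map_add, constCoeff_bracket _ j hj] at h1
    simp [vfOf] at h1
    rw [hstepA i j hi hj] at h1
    exact ha (by linarith)
  -- a i j ≠ 0 → r i = r j
  have heq : ∀ i j : Fin (n + 2), i ≠ L → j ≠ L → a i j ≠ 0 → r i = r j := by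
    intro i j hi hj ha
    have ha' : a j i ≠ 0 := by rw [hstepA i j hi hj]; exact ha
    have h1 := hstepB i j hi hj ha
    have h2 := hstepB j i hj hi ha'
    omega
  -- Step C : a i j ≠ 0 → r i = r p
  have hstepC : ∀ i j : Fin (n + 2), i ≠ L → j ≠ L → a i j ≠ 0 → r i = r p := by
    intro i j hi hj ha
    rcases eq_or_lt_of_le (hle i hi) with h | hlt
    · exact h
    exfalso
    have hapi : a p i = 0 := by
      by_contra hne
      have := heq p i hpL hi hne
      omega
    have h0 := hLeib (vfOf (X i) p) (vfOf_mem_negPart r hlt) (vfOf (X p) L) (hmem p hpL)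
    rw [bracket_vfX_chain p hi, hDval i hi, hDval p hpL, bracket_vfX_const] at h0
    have h1 := congrArg constantCoeff (congrFun h0 j)
    simp only [Pi.add_apply, map_add, constCoeff_bracket _ p hj] at h1
    simp [vfOf, hapi] at h1
    exact ha h1
  intro i j hi hj ha
  have hri : r i = r p := hstepC i j hi hj ha
  have hrj : r j = r p := by
    have ha' : a j i ≠ 0 := by rw [hstepA i j hi hj]; exact ha
    exact hstepC j i hj hi ha'
  refine ⟨hri, hrj, ?_⟩
  -- Step D : compute ι from homogeneity
  have hneg : ((r i : ℤ) - r L) < 0 := by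
    have := hltL i hi
    omega
  have hw := hweight ((r i : ℤ) - r L) (vfOf (X i) L) hneg (homog_vfOf r i L)
  rw [hDval i hi] at hw
  unfold IsHomog at hw
  have h1 := congrArg constantCoeff (congrFun hw j)
  rw [bracket_nabla_const] at h1
  simp [smul_eq_C_mul] at h1
  -- h1 : -(a i j * r j) = (r i - r L + ι) * a i j  (over ℝ)
  have h2 : -((r j : ℝ)) = (r i : ℝ) - (r L : ℝ) + (ι : ℝ) := by
    apply mul_left_cancel₀ ha
    calc a i j * -((r j : ℝ)) = -(a i j * (r j : ℝ)) := by ring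
      _ = ((r i : ℝ) - (r L : ℝ) + (ι : ℝ)) * a i j := h1
      _ = a i j * ((r i : ℝ) - (r L : ℝ) + (ι : ℝ)) := by ring
  have h3 : -((r j : ℤ)) = (r i : ℤ) - (r L : ℤ) + ι := by exact_mod_cast h2
  omega
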